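/- Let A be an n×m real matrix, b ∈ ℝ^n, p ∈ [1,∞), Z = min_{x∈ℝ^m} ‖Ax − b‖_p with minimizer x_opt, and 0 < ε ≤ 1/7. Let T be a real matrix with n columns such that (1−ε)·‖Ax‖_p ≤ ‖TAx‖_p ≤ (1+ε)·‖Ax‖_p for all x ∈ ℝ^m, and suppose ‖T(Ax_opt − b)‖_p ≤ (1+ε)Z. Let x̂_c ∈ ℝ^m satisfy ‖Ax̂_c − b‖_p ≤ 8Z, and let x̂_opt ∈ ℝ^m satisfy ‖T(Ax̂_opt − b)‖_p ≤ ‖T(Ax_opt − b)‖_p. Then ‖Ax̂_opt − Ax̂_c‖_p ≤ 12Z. -/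

import Mathlib

/-!
Both `x̂_opt` and `x_opt` have sketched residual at most `(1 + ε) Z`, so `T A (x̂_opt - x_opt)` has
norm at most `2 (1 + ε) Z`, and the lower distortion bound of `T` on the column space of `A`
gives `‖A (x̂_opt - x_opt)‖_p ≤ 2 (1 + ε) / (1 - ε) · Z ≤ 3 Z` for `ε ≤ 1/5`. The triangle
inequality through `A x_opt` and `b` then adds `Z + 8 Z`.
-/

open scoped BigOperators

/-- The entrywise `p`-norm of a vector: `(∑ i, |v i| ^ p) ^ (1/p)`. -/
noncomputable def pnorm (p : ℝ) {n : ℕ} (v : Fin n → ℝ) : ℝ :=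
  (∑ i, |v i| ^ p) ^ (1 / p)

/-- The dual norm of the `p`-norm: the max-norm if `p = 1`, else the `p/(p-1)`-norm. -/
noncomputable def qnorm (p : ℝ) {n : ℕ} (v : Fin n → ℝ) : ℝ :=
  if p = 1 then ⨆ i, |v i| else pnorm (p / (p - 1)) v

/-- The entrywise `p`-norm of a matrix. -/
noncomputable def mpnorm (p : ℝ) {n d : ℕ} (M : Matrix (Fin n) (Fin d) ℝ) : ℝ :=
  (∑ i, ∑ j, |M i j| ^ p) ^ (1 / p)

/-- `U` is an `(α, β, p)`-well-conditioned basis for the column space of `A`. -/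
def IsWCB (p α β : ℝ) {n m d : ℕ} (A : Matrix (Fin n) (Fin m) ℝ)
    (U : Matrix (Fin n) (Fin d) ℝ) : Prop :=
  LinearMap.range U.mulVecLin = LinearMap.range A.mulVecLin ∧
  mpnorm p U ≤ α ∧
  ∀ z : Fin d → ℝ, qnorm p z ≤ β * pnorm p (U.mulVec z)

/-- `S : Ω → Matrix` is a random `n × n` diagonal sampling matrix with probabilities `pr`:
its diagonal entries are mutually independent, with `S ω i i = (pr i) ^ (-1/p)` with
probability `pr i` and `S ω i i = 0` with probability `1 - pr i`. -/
structure IsSamplingMatrix {Ω : Type} [MeasurableSpace Ω] (μ : MeasureTheory.Measure Ω)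
    (p : ℝ) {n : ℕ} (pr : Fin n → ℝ) (S : Ω → Matrix (Fin n) (Fin n) ℝ) : Prop where
  offdiag : ∀ ω i j, i ≠ j → S ω i j = 0
  meas : ∀ i, Measurable fun ω => S ω i i
  prob_val : ∀ i, μ {ω | S ω i i = (pr i) ^ (-(1 / p))} = ENNReal.ofReal (pr i)
  prob_zero : ∀ i, μ {ω | S ω i i = 0} = ENNReal.ofReal (1 - pr i)
  indep : ProbabilityTheory.iIndepFun (fun i ω => S ω i i) μ

section pnorm

variable {p : ℝ} {n : ℕ}

lemma pnorm_nonneg (v : Fin n → ℝ) : 0 ≤ pnorm p v :=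
  Real.rpow_nonneg (Finset.sum_nonneg fun _ _ => Real.rpow_nonneg (abs_nonneg _) _) _

lemma pnorm_neg (v : Fin n → ℝ) : pnorm p (-v) = pnorm p v := by
  simp [pnorm]

lemma pnorm_add_le (hp : 1 ≤ p) (u v : Fin n → ℝ) :
    pnorm p (u + v) ≤ pnorm p u + pnorm p v := by
  simpa [pnorm] using Real.Lp_add_le Finset.univ u v hp

lemma pnorm_sub_le_add (hp : 1 ≤ p) (u v : Fin n → ℝ) :
    pnorm p (u - v) ≤ pnorm p u + pnorm p v := by
  simpa only [sub_eq_add_neg, pnorm_neg] using pnorm_add_le hp u (-v)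

lemma pnorm_sub_le_sub_add_sub (hp : 1 ≤ p) (u v w : Fin n → ℝ) :
    pnorm p (u - w) ≤ pnorm p (u - v) + pnorm p (v - w) := by
  simpa only [sub_add_sub_cancel] using pnorm_add_le hp (u - v) (v - w)

end pnorm

lemma one_sub_mul_pnorm_mulVec_sub_le {n m k : ℕ} {p ε : ℝ} (hp : 1 ≤ p)
    {A : Matrix (Fin n) (Fin m) ℝ} {T : Matrix (Fin k) (Fin n) ℝ}
    (hT : ∀ x, (1 - ε) * pnorm p (A.mulVec x) ≤ pnorm p (T.mulVec (A.mulVec x)))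
    (b : Fin n → ℝ) (x y : Fin m → ℝ) :
    (1 - ε) * pnorm p (A.mulVec x - A.mulVec y) ≤
      pnorm p (T.mulVec (A.mulVec x - b)) + pnorm p (T.mulVec (A.mulVec y - b)) := by
  have hsketch :
      T.mulVec (A.mulVec (x - y)) = T.mulVec (A.mulVec x - b) - T.mulVec (A.mulVec y - b) := by
    rw [← Matrix.mulVec_sub, sub_sub_sub_cancel_right, Matrix.mulVec_sub]
  calc (1 - ε) * pnorm p (A.mulVec x - A.mulVec y)
      = (1 - ε) * pnorm p (A.mulVec (x - y)) := by rw [Matrix.mulVec_sub]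
    _ ≤ pnorm p (T.mulVec (A.mulVec (x - y))) := hT (x - y)
    _ ≤ _ := hsketch ▸ pnorm_sub_le_add hp _ _

theorem second_stage_opt_in_ball_general {n m k : ℕ} (A : Matrix (Fin n) (Fin m) ℝ)
    (b : Fin n → ℝ) (T : Matrix (Fin k) (Fin n) ℝ) (p ε Z : ℝ)
    (xopt xc xhopt : Fin m → ℝ)
    (hp : 1 ≤ p) (hε' : ε ≤ 1 / 7)
    (hZ : Z = pnorm p (A.mulVec xopt - b))
    (hT : ∀ x : Fin m → ℝ,
      (1 - ε) * pnorm p (A.mulVec x) ≤ pnorm p (T.mulVec (A.mulVec x)) ∧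
      pnorm p (T.mulVec (A.mulVec x)) ≤ (1 + ε) * pnorm p (A.mulVec x))
    (hTopt : pnorm p (T.mulVec (A.mulVec xopt - b)) ≤ (1 + ε) * Z)
    (hxc : pnorm p (A.mulVec xc - b) ≤ 8 * Z)
    (hxhopt : pnorm p (T.mulVec (A.mulVec xhopt - b))
      ≤ pnorm p (T.mulVec (A.mulVec xopt - b))) :
    pnorm p (A.mulVec xhopt - A.mulVec xc) ≤ 12 * Z := by
  have hZ0 : 0 ≤ Z := hZ ▸ pnorm_nonneg _
  have hsketched : (1 - ε) * pnorm p (A.mulVec xhopt - A.mulVec xopt) ≤ 2 * (1 + ε) * Z := by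
    have := one_sub_mul_pnorm_mulVec_sub_le hp (fun x => (hT x).1) b xhopt xopt
    linarith
  have hclose : pnorm p (A.mulVec xhopt - A.mulVec xopt) ≤ 3 * Z := by
    refine le_of_mul_le_mul_left (hsketched.trans ?_) (by linarith : (0 : ℝ) < 1 - ε)
    nlinarith
  have hopt_c : pnorm p (A.mulVec xopt - A.mulVec xc) ≤ 9 * Z := by
    have := pnorm_sub_le_add hp (A.mulVec xopt - b) (A.mulVec xc - b)
    rw [sub_sub_sub_cancel_right, ← hZ] at this
    linarith
  linarith [pnorm_sub_le_sub_add_sub hp (A.mulVec xhopt) (A.mulVec xopt) (A.mulVec xc)]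

/-- **Lemma 4: the second-stage optimum stays in a ball of radius `12 Z` around `A x̂_c`.**
If `T` preserves `p`-norms of `A x` up to `1 ± ε`, `‖T (A x_opt - b)‖_p ≤ (1 + ε) Z`,
`‖A x̂_c - b‖_p ≤ 8 Z`, and `‖T (A x̂_opt - b)‖_p ≤ ‖T (A x_opt - b)‖_p`, then
`‖A x̂_opt - A x̂_c‖_p ≤ 12 Z`. -/
theorem second_stage_opt_in_ball {n m k : ℕ} (A : Matrix (Fin n) (Fin m) ℝ)
    (b : Fin n → ℝ) (T : Matrix (Fin k) (Fin n) ℝ) (p ε Z : ℝ)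
    (xopt xc xhopt : Fin m → ℝ)
    (hp : 1 ≤ p) (hε : 0 < ε) (hε' : ε ≤ 1 / 7)
    (hZ : Z = pnorm p (A.mulVec xopt - b))
    (hopt : ∀ x : Fin m → ℝ, Z ≤ pnorm p (A.mulVec x - b))
    (hT : ∀ x : Fin m → ℝ,
      (1 - ε) * pnorm p (A.mulVec x) ≤ pnorm p (T.mulVec (A.mulVec x)) ∧
      pnorm p (T.mulVec (A.mulVec x)) ≤ (1 + ε) * pnorm p (A.mulVec x))
    (hTopt : pnorm p (T.mulVec (A.mulVec xopt - b)) ≤ (1 + ε) * Z)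
    (hxc : pnorm p (A.mulVec xc - b) ≤ 8 * Z)
    (hxhopt : pnorm p (T.mulVec (A.mulVec xhopt - b))
      ≤ pnorm p (T.mulVec (A.mulVec xopt - b))) :
    pnorm p (A.mulVec xhopt - A.mulVec xc) ≤ 12 * Z :=
  second_stage_opt_in_ball_general A b T p ε Z xopt xc xhopt hp hε' hZ hT hTopt hxc hxhopt
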